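/- arXiv:2301.08220 — 4 statements merged into one kernel-verified Lean document; each statement's English description precedes it below -/
import Mathlib

section
/- Let CM(R,S,𝔯) be a Cayley map on a finite group R and suppose γ generates the stabilizer Aut(CM(R,S,𝔯))_e of the identity vertex. Then γ(S) = S, the restriction γ|_S of γ to S is a power of the cyclic ordering 𝔯, and γ|_S has the same order as γ. -/
/-!
An automorphism fixing the vertex `1` preserves its neighbourhood `S` and, by compatibility with
the rotation at `1`, commutes there with the cycle `𝔯`; a permutation of `S` commuting with a full
cycle is a power of it. Such an automorphism is moreover determined by its action on `S`: if it
fixes a vertex and one neighbour of it, compatibility with the rotation there propagates around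
the whole cyclic neighbourhood, and since `S` generates `R` this spreads over the connected graph.
Hence `γ ^ n` is trivial as soon as it is trivial on `S`, which gives the equality of orders.
-/

/-- `S` is a Cayley connection set on `R`: it avoids the identity, is inverse-closed,
and generates `R`. -/
def IsCayleyGenSet {R : Type*} [Group R] (S : Finset R) : Prop :=
  (1 : R) ∉ S ∧ (∀ s ∈ S, s⁻¹ ∈ S) ∧ Subgroup.closure (S : Set R) = ⊤

/-- `r` is a cyclic ordering of `S` (extended by the identity outside `S`):
a permutation acting as a single cycle of length `|S|` on `S`, with no fixed
points in `S`, fixing everything outside `S`. -/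
def IsCyclicOrderingOn {R : Type*} [Group R] (S : Finset R) (r : Equiv.Perm R) : Prop :=
  r.IsCycleOn (S : Set R) ∧ (∀ x ∈ S, r x ≠ x) ∧ (∀ x ∉ S, r x = x)

/-- The pair `(S, r)` is a labelled Cayley map on `R`. -/
def IsCayleyMap {R : Type*} [Group R] (S : Finset R) (r : Equiv.Perm R) : Prop :=
  IsCayleyGenSet S ∧ IsCyclicOrderingOn S r

/-- `φ` is an automorphism of the Cayley map `CM(R,S,r)`: a graph automorphism of
`Cay(R,S)` (edges `x ~ y` iff `x * y⁻¹ ∈ S`, so the neighbourhood of `g` is `S * g`)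
commuting with the rotations `ρ_g(x) = r (x * g⁻¹) * g`, i.e.
`φ ∘ ρ_g = ρ_{φ g} ∘ φ` on the neighbourhood of each vertex `g`. -/
def IsCayleyMapAut {R : Type*} [Group R] (S : Finset R) (r : Equiv.Perm R)
    (φ : Equiv.Perm R) : Prop :=
  (∀ x y : R, x * y⁻¹ ∈ S ↔ φ x * (φ y)⁻¹ ∈ S) ∧
  (∀ g x : R, x * g⁻¹ ∈ S → φ (r (x * g⁻¹) * g) = r (φ x * (φ g)⁻¹) * φ g)

/-- The Cayley map `CM(R,S,r)` is a mapical regular representation: its automorphisms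
are exactly the right translations `x ↦ x * g`. -/
def IsMRR {R : Type*} [Group R] (S : Finset R) (r : Equiv.Perm R) : Prop :=
  ∀ φ : Equiv.Perm R, IsCayleyMapAut S r φ ↔ ∃ g : R, ∀ x : R, φ x = x * g

namespace Equiv.Perm

variable {α : Type*}

theorem apply_pow_apply_of_commute_on {r γ : Perm α} {s : Set α} (hr : Set.MapsTo r s s)
    (hcomm : ∀ x ∈ s, γ (r x) = r (γ x)) (n : ℕ) {x : α} (hx : x ∈ s) :
    γ ((r ^ n) x) = (r ^ n) (γ x) := by
  induction n with
  | zero => rfl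
  | succ n ih => rw [pow_succ', mul_apply, mul_apply, hcomm _ (hr.perm_pow n hx), ih]

theorem IsCycleOn.exists_pow_eqOn_of_commute_on {r γ : Perm α} {s : Set α} (hr : r.IsCycleOn s)
    (hs : s.Finite) (hγ : Set.MapsTo γ s s) (hcomm : ∀ x ∈ s, γ (r x) = r (γ x)) :
    ∃ k : ℕ, ∀ x ∈ s, γ x = (r ^ k) x := by
  rcases s.eq_empty_or_nonempty with rfl | ⟨a, ha⟩
  · exact ⟨0, fun x hx => hx.elim⟩
  obtain ⟨k, hk⟩ := hr.exists_pow_eq' hs ha (hγ ha)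
  refine ⟨k, fun x hx => ?_⟩
  obtain ⟨m, rfl⟩ := hr.exists_pow_eq' hs ha hx
  rw [apply_pow_apply_of_commute_on hr.1.mapsTo hcomm m ha, ← hk, ← mul_apply, ← mul_apply,
    ← pow_add, ← pow_add, add_comm]

theorem orderOf_subtypePerm_eq_orderOf {p : α → Prop} {γ : Perm α} (h : ∀ x, p (γ x) ↔ p x)
    (hdet : ∀ n : ℕ, (∀ x, p x → (γ ^ n) x = x) → γ ^ n = 1) :
    orderOf (γ.subtypePerm h) = orderOf γ := by
  refine orderOf_eq_orderOf_iff.2 fun n => ⟨fun hn => hdet n fun x hx => ?_, fun hn => ?_⟩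
  · simpa [subtypePerm_pow] using congrArg Subtype.val (Perm.ext_iff.1 hn ⟨x, hx⟩)
  · ext x
    simp [subtypePerm_pow, hn]

end Equiv.Perm

namespace IsCayleyMapAut

variable {R : Type*} [Group R] {S : Finset R} {r φ : Equiv.Perm R}

theorem mem_iff_apply_mem (hφ : IsCayleyMapAut S r φ) (h1 : φ 1 = 1) (x : R) :
    x ∈ S ↔ φ x ∈ S := by
  simpa [h1] using hφ.1 x 1

theorem apply_rotation_eq_rotation_apply (hφ : IsCayleyMapAut S r φ) (h1 : φ 1 = 1) {s : R}
    (hs : s ∈ S) : φ (r s) = r (φ s) := by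
  simpa [h1] using hφ.2 1 s (by simpa using hs)

theorem apply_mul_eq_self_of_apply_mul_eq_self (hφ : IsCayleyMapAut S r φ)
    (hr : r.IsCycleOn (S : Set R)) {g t : R} (hg : φ g = g) (ht : t ∈ S)
    (htg : φ (t * g) = t * g) {s : R} (hs : s ∈ S) :
    φ (s * g) = s * g := by
  have step : ∀ u ∈ S, φ (u * g) = u * g → φ (r u * g) = r u * g := fun u hu hug => by
    simpa [hg, hug] using hφ.2 g (u * g) (by simpa using hu)
  obtain ⟨m, rfl⟩ := hr.exists_pow_eq' S.finite_toSet ht hs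
  clear hs
  induction m with
  | zero => exact htg
  | succ m ih =>
    rw [pow_succ', Equiv.Perm.mul_apply]
    exact step _ (hr.1.mapsTo.perm_pow m ht) ih

theorem eq_one_of_fixes_gens (hφ : IsCayleyMapAut S r φ) (hinv : ∀ s ∈ S, s⁻¹ ∈ S)
    (hclos : Subgroup.closure (S : Set R) = ⊤) (hr : r.IsCycleOn (S : Set R)) (h1 : φ 1 = 1)
    (hS : ∀ s ∈ S, φ s = s) : φ = 1 := by
  let Fixed (g : R) : Prop := φ g = g ∧ ∀ s ∈ S, φ (s * g) = s * g
  -- moving along the edge from `g` to `s * g`, the old vertex `g = s⁻¹ * (s * g)` is a fixed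
  -- neighbour of the new one
  have step : ∀ s ∈ S, ∀ g, Fixed g → Fixed (s * g) := fun s hs g ⟨_, hnbhd⟩ =>
    ⟨hnbhd s hs, fun _ hu => hφ.apply_mul_eq_self_of_apply_mul_eq_self hr (hnbhd s hs)
      (hinv s hs) (by rwa [inv_mul_cancel_left]) hu⟩
  have hall : ∀ g, Fixed g := fun g => by
    have hg : g ∈ Subgroup.closure (S : Set R) := hclos ▸ Subgroup.mem_top g
    induction hg using Subgroup.closure_induction_left with
    | one => exact ⟨h1, fun s hs => by simpa using hS s hs⟩
    | mul_left s hs y _ ih => exact step s hs y ih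
    | inv_mul_cancel s hs y _ ih => exact step s⁻¹ (hinv s hs) y ih
  ext g
  exact (hall g).1

end IsCayleyMapAut

theorem generator_of_stabilizer_props_general {R : Type*} [Group R]
    (S : Finset R) (𝔯 : Equiv.Perm R) (h : IsCayleyMap S 𝔯) (γ : Equiv.Perm R)
    (hgen : {φ : Equiv.Perm R | IsCayleyMapAut S 𝔯 φ ∧ φ 1 = 1} =
      {φ : Equiv.Perm R | ∃ k : ℕ, φ = γ ^ k}) :
    ∃ hS : ∀ x : R, x ∈ S ↔ γ x ∈ S,
      (∃ k : ℕ, ∀ x ∈ S, γ x = (𝔯 ^ k) x) ∧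
      orderOf (γ.subtypePerm (fun x => (hS x).symm)) = orderOf γ := by
  obtain ⟨⟨-, hinv, hclos⟩, hcyc, -⟩ := h
  have hstab (n : ℕ) : IsCayleyMapAut S 𝔯 (γ ^ n) ∧ (γ ^ n) 1 = 1 := by
    have hn : γ ^ n ∈ {φ : Equiv.Perm R | ∃ k : ℕ, φ = γ ^ k} := ⟨n, rfl⟩
    rwa [← hgen] at hn
  obtain ⟨hγ, hγ1⟩ : IsCayleyMapAut S 𝔯 γ ∧ γ 1 = 1 := pow_one γ ▸ hstab 1
  have hS := hγ.mem_iff_apply_mem hγ1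
  refine ⟨hS, ?_, ?_⟩
  · exact hcyc.exists_pow_eqOn_of_commute_on S.finite_toSet (fun x hx => (hS x).1 hx)
      fun _ hx => hγ.apply_rotation_eq_rotation_apply hγ1 hx
  · exact Equiv.Perm.orderOf_subtypePerm_eq_orderOf _ fun n hn =>
      (hstab n).1.eq_one_of_fixes_gens hinv hclos hcyc (hstab n).2 hn

/-- If `γ` generates the stabilizer of the identity vertex in the automorphism group
of a Cayley map `CM(R,S,𝔯)`, then `γ(S) = S`, the restriction of `γ` to `S` is a
power of `𝔯`, and the restriction of `γ` to `S` has the same order as `γ`. -/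
theorem generator_of_stabilizer_props {R : Type*} [Group R] [Fintype R]
    (S : Finset R) (𝔯 : Equiv.Perm R) (h : IsCayleyMap S 𝔯) (γ : Equiv.Perm R)
    (hgen : {φ : Equiv.Perm R | IsCayleyMapAut S 𝔯 φ ∧ φ 1 = 1} =
      {φ : Equiv.Perm R | ∃ k : ℕ, φ = γ ^ k}) :
    ∃ hS : ∀ x : R, x ∈ S ↔ γ x ∈ S,
      (∃ k : ℕ, ∀ x ∈ S, γ x = (𝔯 ^ k) x) ∧
      orderOf (γ.subtypePerm (fun x => (hS x).symm)) = orderOf γ :=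
  generator_of_stabilizer_props_general S 𝔯 h γ hgen
end

section
/- Let Ω be a finite set, let ω ∈ Ω, let G and G' be transitive subgroups of Sym(Ω), and suppose there is a group isomorphism φ : G → G' with φ(G_ω) = G'_ω, where G_ω and G'_ω are the stabilizers of ω. Then there exists σ ∈ Sym(Ω) with σ(ω) = ω and G' = σ⁻¹ G σ. -/
/-!
A transitive action is isomorphic to the coset action on `G ⧸ G_ω`, and an isomorphism
`φ : G ≃* G'` with `φ(G_ω) = G'_ω` induces a `φ`-equivariant bijection
`G ⧸ G_ω ≃ G' ⧸ G'_ω`. The resulting bijection `f : Ω ≃ Ω` sends `g ω` to `φ g ω`,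
so `f` fixes `ω` and `f g f⁻¹ = φ g` for all `g ∈ G`; its inverse is the required `σ`.
-/

open Equiv MulAction

namespace Subgroup

variable {G H : Type*} [Group G] [Group H]

def quotientCongr (φ : G ≃* H) {S : Subgroup G} {T : Subgroup H}
    (h : S.map φ.toMonoidHom = T) : G ⧸ S ≃ H ⧸ T :=
  Quotient.congr φ.toEquiv fun x y => by
    rw [QuotientGroup.leftRel_apply, QuotientGroup.leftRel_apply, ← h, mem_map_equiv]
    simp

theorem quotientCongr_mk (φ : G ≃* H) {S : Subgroup G} {T : Subgroup H}
    (h : S.map φ.toMonoidHom = T) (g : G) :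
    quotientCongr φ h (g : G ⧸ S) = (φ g : H ⧸ T) :=
  rfl

end Subgroup

namespace MulAction

variable {G H α β : Type*} [Group G] [Group H] [MulAction G α] [MulAction H β]

noncomputable def quotientStabilizerEquiv [IsPretransitive G α] (a : α) :
    G ⧸ stabilizer G a ≃ α :=
  Equiv.ofBijective (ofQuotientStabilizer G a)
    ⟨injective_ofQuotientStabilizer G a, fun x =>
      let ⟨g, hg⟩ := exists_smul_eq G a x
      ⟨g, hg⟩⟩

theorem quotientStabilizerEquiv_symm_smul [IsPretransitive G α] (a : α) (g : G) :
    (quotientStabilizerEquiv a).symm (g • a) = (g : G ⧸ stabilizer G a) :=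
  (Equiv.symm_apply_eq _).mpr rfl

variable [IsPretransitive G α] [IsPretransitive H β] (φ : G ≃* H) {a : α} {b : β}
  (h : (stabilizer G a).map φ.toMonoidHom = stabilizer H b)

noncomputable def equivOfMapStabilizer : α ≃ β :=
  (quotientStabilizerEquiv a).symm.trans
    ((Subgroup.quotientCongr φ h).trans (quotientStabilizerEquiv b))

theorem equivOfMapStabilizer_smul_basepoint (g : G) :
    equivOfMapStabilizer φ h (g • a) = φ g • b := by
  rw [equivOfMapStabilizer, Equiv.trans_apply, Equiv.trans_apply,
    quotientStabilizerEquiv_symm_smul, Subgroup.quotientCongr_mk]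
  rfl

theorem equivOfMapStabilizer_basepoint : equivOfMapStabilizer φ h a = b := by
  simpa using equivOfMapStabilizer_smul_basepoint φ h 1

theorem equivOfMapStabilizer_smul (g : G) (x : α) :
    equivOfMapStabilizer φ h (g • x) = φ g • equivOfMapStabilizer φ h x := by
  obtain ⟨k, rfl⟩ := exists_smul_eq G a x
  rw [smul_smul, equivOfMapStabilizer_smul_basepoint, equivOfMapStabilizer_smul_basepoint,
    map_mul, mul_smul]

end MulAction

namespace Equiv.Perm

variable {Ω : Type*}

theorem isPretransitive_subgroup {G : Subgroup (Perm Ω)}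
    (hG : ∀ a b : Ω, ∃ g ∈ G, g a = b) :
    IsPretransitive G Ω :=
  ⟨fun a b =>
    let ⟨g, hg, hgab⟩ := hG a b
    ⟨⟨g, hg⟩, hgab⟩⟩

theorem stabilizer_subgroup_eq_subgroupOf (G : Subgroup (Perm Ω)) (ω : Ω) :
    stabilizer G ω = (G ⊓ stabilizer (Perm Ω) ω).subgroupOf G := by
  ext g
  simp [Subgroup.mem_subgroupOf, mem_stabilizer_iff, Subgroup.smul_def]

theorem mem_iff_conj_mem_of_conj_eq {G G' : Subgroup (Perm Ω)} (φ : G ≃* G') (τ : Perm Ω)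
    (hτ : ∀ g : G, τ * g * τ⁻¹ = φ g) (g : Perm Ω) :
    g ∈ G' ↔ τ⁻¹ * g * τ ∈ G := by
  constructor
  · intro hg
    have hconj : τ⁻¹ * g * τ = φ.symm ⟨g, hg⟩ := by
      rw [eq_comm, ← mul_inv_eq_iff_eq_mul, eq_inv_mul_iff_mul_eq, ← mul_assoc, hτ]
      simp
    exact hconj ▸ (φ.symm ⟨g, hg⟩).2
  · intro hg
    have hconj : φ ⟨_, hg⟩ = g := by
      rw [← hτ]
      group
    exact hconj ▸ (φ ⟨_, hg⟩).2

end Equiv.Perm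

theorem transitive_subgroups_iso_with_stabilizers_are_conjugate_general
    {Ω : Type*} (ω : Ω) (G G' : Subgroup (Equiv.Perm Ω))
    (hG : ∀ a b : Ω, ∃ g ∈ G, g a = b) (hG' : ∀ a b : Ω, ∃ g ∈ G', g a = b)
    (φ : ↥G ≃* ↥G')
    (hφ : Subgroup.map φ.toMonoidHom
        ((G ⊓ MulAction.stabilizer (Equiv.Perm Ω) ω).subgroupOf G) =
      (G' ⊓ MulAction.stabilizer (Equiv.Perm Ω) ω).subgroupOf G') :
    ∃ σ : Equiv.Perm Ω, σ ω = ω ∧ ∀ g : Equiv.Perm Ω, g ∈ G' ↔ σ * g * σ⁻¹ ∈ G := by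
  have := Perm.isPretransitive_subgroup hG
  have := Perm.isPretransitive_subgroup hG'
  rw [← Perm.stabilizer_subgroup_eq_subgroupOf, ← Perm.stabilizer_subgroup_eq_subgroupOf] at hφ
  set f : Perm Ω := equivOfMapStabilizer φ hφ
  have hf : ∀ g : G, f * g * f⁻¹ = φ g := fun g => by
    rw [mul_inv_eq_iff_eq_mul]
    exact Equiv.ext fun x => equivOfMapStabilizer_smul φ hφ g x
  refine ⟨f⁻¹, ?_, fun g => ?_⟩
  · rw [Perm.inv_eq_iff_eq]
    exact (equivOfMapStabilizer_basepoint φ hφ).symm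
  · simpa using Perm.mem_iff_conj_mem_of_conj_eq φ f hf g

/-- If `G` and `G'` are transitive subgroups of `Sym(Ω)` and some group isomorphism
`G → G'` carries the stabilizer of `ω` in `G` onto the stabilizer of `ω` in `G'`,
then `G` and `G'` are conjugate by a permutation fixing `ω`: there is `σ ∈ Sym(Ω)`
with `σ ω = ω` and `G' = σ⁻¹ G σ`. -/
theorem transitive_subgroups_iso_with_stabilizers_are_conjugate
    {Ω : Type*} [Fintype Ω] (ω : Ω) (G G' : Subgroup (Equiv.Perm Ω))
    (hG : ∀ a b : Ω, ∃ g ∈ G, g a = b) (hG' : ∀ a b : Ω, ∃ g ∈ G', g a = b)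
    (φ : ↥G ≃* ↥G')
    (hφ : Subgroup.map φ.toMonoidHom
        ((G ⊓ MulAction.stabilizer (Equiv.Perm Ω) ω).subgroupOf G) =
      (G' ⊓ MulAction.stabilizer (Equiv.Perm Ω) ω).subgroupOf G') :
    ∃ σ : Equiv.Perm Ω, σ ω = ω ∧ ∀ g : Equiv.Perm Ω, g ∈ G' ↔ σ * g * σ⁻¹ ∈ G :=
  transitive_subgroups_iso_with_stabilizers_are_conjugate_general ω G G' hG hG' φ hφ
end

section
/- Let R be a finite group of order r with identity e, and let γ be a non-identity permutation of the set R fixing e and generating a cyclic group of order strictly less than r. Then the number of labelled Cayley maps (S, 𝔯) on R such that γ is an automorphism of CM(R,S,𝔯) is at most (r − 1) · (r/2) · ⌊r/2⌋! · 2^r. -/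
namespace CayleyMapCountAux

open Equiv Function

variable {R : Type*} [Group R] [Fintype R] [DecidableEq R]

/-- The orbit of `x` under the cyclic group generated by `γ`, as a `Finset`. -/
noncomputable def orbF (γ : Equiv.Perm R) (x : R) : Finset R :=
  @Finset.filter _ (fun y => γ.SameCycle x y) (fun _ => Classical.propDecidable _) Finset.univ

lemma mem_orbF {γ : Equiv.Perm R} {x y : R} : y ∈ orbF γ x ↔ γ.SameCycle x y := by
  simp [orbF]

lemma orbF_nonempty (γ : Equiv.Perm R) (x : R) : (orbF γ x).Nonempty :=
  ⟨x, mem_orbF.mpr (Equiv.Perm.SameCycle.refl γ x)⟩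

/-- A canonical representative of the `γ`-orbit of `x`. -/
noncomputable def rep (ord : R ≃ Fin (Fintype.card R)) (γ : Equiv.Perm R) (x : R) : R :=
  ord.symm (((orbF γ x).image ord).min' ((orbF_nonempty γ x).image ord))

variable (ord : R ≃ Fin (Fintype.card R)) {γ : Equiv.Perm R}

lemma rep_sameCycle (x : R) : γ.SameCycle x (rep ord γ x) := by
  obtain ⟨y, hy, he⟩ := Finset.mem_image.mp (Finset.min'_mem ((orbF γ x).image ord)
    ((orbF_nonempty γ x).image ord))
  have h : rep ord γ x = y := by rw [rep, ← he, Equiv.symm_apply_apply]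
  rw [h]; exact mem_orbF.mp hy

lemma orbF_eq {x y : R} (h : γ.SameCycle x y) : orbF γ x = orbF γ y := by
  ext z
  simp only [mem_orbF]
  exact ⟨fun hz => h.symm.trans hz, fun hz => h.trans hz⟩

lemma rep_congr {x y : R} (h : γ.SameCycle x y) : rep ord γ x = rep ord γ y := by
  have h2 : orbF γ x = orbF γ y := orbF_eq h
  simp only [rep, h2]

lemma rep_rep (x : R) : rep ord γ (rep ord γ x) = rep ord γ x :=
  (rep_congr ord (rep_sameCycle ord x)).symm

lemma sameCycle_pow {f : Equiv.Perm R} {x y : R} (h : f.SameCycle x y) :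
    ∃ j : ℕ, (f ^ j) x = y := by
  obtain ⟨i, _, he⟩ := h.exists_pow_eq'
  exact ⟨i, he⟩

variable {S : Finset R} {c : Equiv.Perm R}

lemma memS_iff (haut : IsCayleyMapAut S c γ) (hfix : γ 1 = 1) (x : R) :
    x ∈ S ↔ γ x ∈ S := by
  have := haut.1 x 1
  simpa [hfix] using this

lemma comm1 (haut : IsCayleyMapAut S c γ) (hfix : γ 1 = 1) {s : R} (hs : s ∈ S) :
    c (γ s) = γ (c s) := by
  have := haut.2 1 s (by simpa using hs)
  simp only [inv_one, mul_one, hfix] at this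
  exact this.symm

lemma powS (haut : IsCayleyMapAut S c γ) (hfix : γ 1 = 1) (j : ℕ) {s : R} (hs : s ∈ S) :
    (γ ^ j) s ∈ S := by
  induction j with
  | zero => simpa using hs
  | succ n ih =>
    have h1 : (γ ^ (n + 1)) s = γ ((γ ^ n) s) := by rw [pow_succ']; rfl
    rw [h1]
    exact (memS_iff haut hfix _).mp ih

lemma commPow (haut : IsCayleyMapAut S c γ) (hfix : γ 1 = 1) (j : ℕ) {s : R} (hs : s ∈ S) :
    c ((γ ^ j) s) = (γ ^ j) (c s) := by
  induction j with
  | zero => simp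
  | succ n ih =>
    have h1 : (γ ^ (n + 1)) s = γ ((γ ^ n) s) := by rw [pow_succ']; rfl
    have h2 : (γ ^ (n + 1)) (c s) = γ ((γ ^ n) (c s)) := by rw [pow_succ']; rfl
    rw [h1, h2, comm1 haut hfix (powS haut hfix n hs), ih]

lemma sameCycle_mem (haut : IsCayleyMapAut S c γ) (hfix : γ 1 = 1) {s y : R} (hs : s ∈ S)
    (h : γ.SameCycle s y) : y ∈ S := by
  obtain ⟨j, hj⟩ := sameCycle_pow h
  rw [← hj]
  exact powS haut hfix j hs

lemma repS (haut : IsCayleyMapAut S c γ) (hfix : γ 1 = 1) {s : R} (hs : s ∈ S) :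
    rep ord γ s ∈ S :=
  sameCycle_mem haut hfix hs (rep_sameCycle ord s)

lemma cS (hcyc : IsCyclicOrderingOn S c) {s : R} (hs : s ∈ S) : c s ∈ S := by
  have := hcyc.1.1.mapsTo (by simpa using hs)
  simpa using this

lemma cPowS (hcyc : IsCyclicOrderingOn S c) (j : ℕ) {s : R} (hs : s ∈ S) : (c ^ j) s ∈ S := by
  induction j with
  | zero => simpa using hs
  | succ n ih =>
    have h1 : (c ^ (n + 1)) s = c ((c ^ n) s) := by rw [pow_succ']; rfl
    rw [h1]
    exact cS hcyc ih

lemma reachS (hcyc : IsCyclicOrderingOn S c) {s t : R} (hs : s ∈ S) (ht : t ∈ S) :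
    ∃ j : ℕ, (c ^ j) s = t :=
  sameCycle_pow (hcyc.1.2 (by simpa using hs) (by simpa using ht))

lemma propagate (hcyc : IsCyclicOrderingOn S c) (P : R → Prop)
    (hstep : ∀ u ∈ S, P u → P (c u)) {s t : R} (hs : s ∈ S) (ht : t ∈ S) (hP : P s) : P t := by
  obtain ⟨j, hj⟩ := reachS hcyc hs ht
  rw [← hj]
  clear hj ht
  induction j with
  | zero => simpa using hP
  | succ n ih =>
    have h1 : (c ^ (n + 1)) s = c ((c ^ n) s) := by rw [pow_succ']; rfl
    rw [h1]
    exact hstep _ (cPowS hcyc n hs) ih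

lemma rigid (hmap : IsCayleyMap S c) (haut : IsCayleyMapAut S c γ)
    (hfix : γ 1 = 1) (hγ : γ ≠ 1) : ¬ (∀ s ∈ S, γ s = s) := by
  intro hall
  apply hγ
  have hSinv : (↑S : Set R)⁻¹ = (↑S : Set R) := by
    ext x
    simp only [Set.mem_inv, Finset.mem_coe]
    exact ⟨fun h => by simpa using hmap.1.2.1 _ h, fun h => hmap.1.2.1 x h⟩
  have htop : ∀ g : R, g ∈ Submonoid.closure (↑S : Set R) := by
    intro g
    have h1 := Subgroup.closure_toSubmonoid (↑S : Set R)
    rw [hSinv, Set.union_self] at h1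
    have h2 : g ∈ (Subgroup.closure (↑S : Set R)).toSubmonoid := by
      rw [Subgroup.mem_toSubmonoid, hmap.1.2.2]
      exact Subgroup.mem_top g
    rwa [h1] at h2
  have hstep : ∀ s ∈ S, ∀ g : R, (γ g = g ∧ ∀ t ∈ S, γ (t * g) = t * g) →
      (γ (s * g) = s * g ∧ ∀ t ∈ S, γ (t * (s * g)) = t * (s * g)) := by
    intro s hsS g hg
    have hh : γ (s * g) = s * g := hg.2 s hsS
    refine ⟨hh, ?_⟩
    intro t ht
    have hstep2 : ∀ u ∈ S, (γ (u * (s * g)) = u * (s * g)) →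
        (γ (c u * (s * g)) = c u * (s * g)) := by
      intro u hu hPu
      have harg : (u * (s * g)) * (s * g)⁻¹ ∈ S := by rw [mul_inv_cancel_right]; exact hu
      have h3 := haut.2 (s * g) (u * (s * g)) harg
      rw [mul_inv_cancel_right] at h3
      rw [hPu, hh, mul_inv_cancel_right] at h3
      exact h3
    have hs0 : s⁻¹ ∈ S := hmap.1.2.1 s hsS
    have hPs0 : γ (s⁻¹ * (s * g)) = s⁻¹ * (s * g) := by
      rw [inv_mul_cancel_left]
      exact hg.1
    exact propagate hmap.2 (fun u => γ (u * (s * g)) = u * (s * g)) hstep2 hs0 ht hPs0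
  have hbase : γ (1 : R) = 1 ∧ ∀ t ∈ S, γ (t * (1 : R)) = t * 1 :=
    ⟨hfix, fun t ht => by rw [mul_one]; exact hall t ht⟩
  have hind : ∀ g ∈ Submonoid.closure (↑S : Set R), ∀ h : R,
      (γ h = h ∧ ∀ t ∈ S, γ (t * h) = t * h) →
      (γ (g * h) = g * h ∧ ∀ t ∈ S, γ (t * (g * h)) = t * (g * h)) := by
    intro g hg
    refine Submonoid.closure_induction ?_ ?_ ?_ hg
    · intro x hx h hh
      exact hstep x hx h hh
    · intro h hh
      simpa using hh
    · intro x y _ _ px py h hh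
      have := px (y * h) (py h hh)
      simpa [mul_assoc] using this
  ext x
  have := (hind x (htop x) 1 hbase).1
  simpa using this

lemma nofix (hmap : IsCayleyMap S c) (haut : IsCayleyMapAut S c γ)
    (hfix : γ 1 = 1) (hγ : γ ≠ 1) {s : R} (hs : s ∈ S) : γ s ≠ s := by
  intro hss
  apply rigid hmap haut hfix hγ
  intro t ht
  have hstep : ∀ u ∈ S, γ u = u → γ (c u) = c u := by
    intro u hu h
    have h2 := comm1 haut hfix hu
    rw [h] at h2
    exact h2.symm
  exact propagate hmap.2 (fun x => γ x = x) hstep hs ht hss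

lemma omap_inj (haut : IsCayleyMapAut S c γ) (hfix : γ 1 = 1) {u v : R} (hu : u ∈ S)
    (h : rep ord γ (c u) = rep ord γ (c v)) : γ.SameCycle u v := by
  have h2 : γ.SameCycle (rep ord γ (c u)) (c v) := by
    rw [h]
    exact (rep_sameCycle ord (c v)).symm
  have h1 : γ.SameCycle (c u) (c v) := (rep_sameCycle ord (c u)).trans h2
  obtain ⟨j, hj⟩ := sameCycle_pow h1
  rw [← commPow haut hfix j hu] at hj
  have h3 : (γ ^ j) u = v := c.injective hj
  exact ⟨(j : ℤ), by rw [zpow_natCast]; exact h3⟩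

/-- The predicate "being a canonical representative of a non-trivial `γ`-orbit". -/
def PaP (ord : R ≃ Fin (Fintype.card R)) (γ : Equiv.Perm R) (x : R) : Prop :=
  rep ord γ x = x ∧ γ x ≠ x

/-- The set of canonical representatives of the orbits of `γ` inside `S`. -/
noncomputable def RpF (ord : R ≃ Fin (Fintype.card R)) (γ : Equiv.Perm R)
    (p : Finset R × Equiv.Perm R) : Finset R :=
  p.1.image (rep ord γ)

/-- The first component of the encoding: the representatives together with their images. -/
noncomputable def AF (ord : R ≃ Fin (Fintype.card R)) (γ : Equiv.Perm R)
    (p : Finset R × Equiv.Perm R) : Finset R :=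
  RpF ord γ p ∪ (RpF ord γ p).image p.2

/-- The map induced on orbit representatives by the cyclic ordering. -/
noncomputable def tauF (ord : R ≃ Fin (Fintype.card R)) (γ : Equiv.Perm R)
    (p : Finset R × Equiv.Perm R) (u : {x : R // PaP ord γ x}) : {x : R // PaP ord γ x} :=
  @dite _ ((u : R) ∈ RpF ord γ p ∧ PaP ord γ (rep ord γ (p.2 u)))
    (Classical.propDecidable _) (fun h => ⟨rep ord γ (p.2 u), h.2⟩) (fun _ => u)

/-- The full encoding map. -/
noncomputable def PhiF (ord : R ≃ Fin (Fintype.card R)) (γ : Equiv.Perm R)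
    (η : {x : R // PaP ord γ x} ↪ Fin (Fintype.card R / 2)) (p : Finset R × Equiv.Perm R) :
    Finset {x : R // x ≠ 1} × Equiv.Perm (Fin (Fintype.card R / 2)) :=
  ((AF ord γ p).subtype (· ≠ (1 : R)),
    Equiv.Perm.viaEmbedding (@dite _ (Function.Bijective (tauF ord γ p)) (Classical.propDecidable _)
      (fun h => Equiv.ofBijective _ h) (fun _ => Equiv.refl _)) η)

section SolutionFacts

lemma RpF_subset (haut : IsCayleyMapAut S c γ) (hfix : γ 1 = 1) :
    RpF ord γ (S, c) ⊆ S := by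
  intro y hy
  obtain ⟨s, hs, rfl⟩ := Finset.mem_image.mp hy
  exact repS ord haut hfix hs

lemma AF_subset (hmap : IsCayleyMap S c) (haut : IsCayleyMapAut S c γ) (hfix : γ 1 = 1) :
    AF ord γ (S, c) ⊆ S := by
  apply Finset.union_subset (RpF_subset ord haut hfix)
  intro y hy
  obtain ⟨u, hu, rfl⟩ := Finset.mem_image.mp hy
  exact cS hmap.2 (RpF_subset ord haut hfix hu)

lemma PaP_of_memRp (hmap : IsCayleyMap S c) (haut : IsCayleyMapAut S c γ) (hfix : γ 1 = 1)
    (hγ : γ ≠ 1) {u : R} (hu : u ∈ RpF ord γ (S, c)) : PaP ord γ u := by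
  obtain ⟨s, hs, rfl⟩ := Finset.mem_image.mp hu
  exact ⟨rep_rep ord s, nofix hmap haut hfix hγ (repS ord haut hfix hs)⟩

lemma memS_of_memRp (haut : IsCayleyMapAut S c γ) (hfix : γ 1 = 1) {u : R}
    (hu : u ∈ RpF ord γ (S, c)) : u ∈ S :=
  RpF_subset ord haut hfix hu

lemma rep_c_memRp (hmap : IsCayleyMap S c) {u : R} (hu : u ∈ S) :
    rep ord γ (c u) ∈ RpF ord γ (S, c) :=
  Finset.mem_image.mpr ⟨c u, cS hmap.2 hu, rfl⟩

lemma tauF_of_mem (hmap : IsCayleyMap S c) (haut : IsCayleyMapAut S c γ) (hfix : γ 1 = 1)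
    (hγ : γ ≠ 1) {u : {x : R // PaP ord γ x}} (hu : (u : R) ∈ RpF ord γ (S, c)) :
    tauF ord γ (S, c) u = ⟨rep ord γ (c u),
      PaP_of_memRp ord hmap haut hfix hγ
        (rep_c_memRp ord hmap (memS_of_memRp ord haut hfix hu))⟩ := by
  rw [tauF]
  rw [dif_pos ⟨hu, PaP_of_memRp ord hmap haut hfix hγ
    (rep_c_memRp ord hmap (memS_of_memRp ord haut hfix hu))⟩]

lemma tauF_of_not_mem {u : {x : R // PaP ord γ x}} (hu : (u : R) ∉ RpF ord γ (S, c)) :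
    tauF ord γ (S, c) u = u := by
  rw [tauF]
  rw [dif_neg (fun h => hu h.1)]

lemma tauF_bijective (hmap : IsCayleyMap S c) (haut : IsCayleyMapAut S c γ) (hfix : γ 1 = 1)
    (hγ : γ ≠ 1) : Function.Bijective (tauF ord γ (S, c)) := by
  rw [← Finite.injective_iff_bijective]
  intro u v huv
  by_cases hu : (u : R) ∈ RpF ord γ (S, c) <;> by_cases hv : (v : R) ∈ RpF ord γ (S, c)
  · rw [tauF_of_mem ord hmap haut hfix hγ hu, tauF_of_mem ord hmap haut hfix hγ hv] at huv
    have h1 : rep ord γ (c u) = rep ord γ (c v) := congrArg Subtype.val huv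
    have h2 : γ.SameCycle (u : R) (v : R) :=
      omap_inj ord haut hfix (memS_of_memRp ord haut hfix hu) h1
    have h3 : rep ord γ (u : R) = rep ord γ (v : R) := rep_congr ord h2
    rw [u.2.1, v.2.1] at h3
    exact Subtype.ext h3
  · exfalso
    rw [tauF_of_mem ord hmap haut hfix hγ hu, tauF_of_not_mem ord hv] at huv
    apply hv
    have : (v : R) = rep ord γ (c u) := by rw [← huv]
    rw [this]
    exact rep_c_memRp ord hmap (memS_of_memRp ord haut hfix hu)
  · exfalso
    rw [tauF_of_not_mem ord hu, tauF_of_mem ord hmap haut hfix hγ hv] at huv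
    apply hu
    have : (u : R) = rep ord γ (c v) := by rw [huv]
    rw [this]
    exact rep_c_memRp ord hmap (memS_of_memRp ord haut hfix hv)
  · rw [tauF_of_not_mem ord hu, tauF_of_not_mem ord hv] at huv
    exact huv

end SolutionFacts

lemma phi_injOn (γ : Equiv.Perm R) (hγ : γ ≠ 1) (hfix : γ 1 = 1)
    (ord : R ≃ Fin (Fintype.card R))
    (η : {x : R // PaP ord γ x} ↪ Fin (Fintype.card R / 2)) :
    Set.InjOn (PhiF ord γ η) {p : Finset R × Equiv.Perm R |
      IsCayleyMap p.1 p.2 ∧ IsCayleyMapAut p.1 p.2 γ} := by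
  rintro ⟨S₁, c₁⟩ ⟨hm₁, ha₁⟩ ⟨S₂, c₂⟩ ⟨hm₂, ha₂⟩ heq
  simp only [PhiF, Prod.mk.injEq] at heq
  obtain ⟨hA', hπ'⟩ := heq
  have hAS₁ : ∀ x ∈ AF ord γ (S₁, c₁), x ≠ (1 : R) := by
    intro x hx h1
    exact hm₁.1.1 (h1 ▸ AF_subset ord hm₁ ha₁ hfix hx)
  have hAS₂ : ∀ x ∈ AF ord γ (S₂, c₂), x ≠ (1 : R) := by
    intro x hx h1
    exact hm₂.1.1 (h1 ▸ AF_subset ord hm₂ ha₂ hfix hx)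
  have hA : AF ord γ (S₁, c₁) = AF ord γ (S₂, c₂) := by
    have h1 := congrArg (Finset.map (Function.Embedding.subtype (· ≠ (1 : R)))) hA'
    rwa [Finset.subtype_map_of_mem hAS₁, Finset.subtype_map_of_mem hAS₂] at h1
  have hS : S₁ = S₂ := by
    apply Finset.Subset.antisymm
    · intro y hy
      have h1 : rep ord γ y ∈ AF ord γ (S₁, c₁) :=
        Finset.mem_union_left _ (Finset.mem_image.mpr ⟨y, hy, rfl⟩)
      rw [hA] at h1
      have h2 : rep ord γ y ∈ S₂ := AF_subset ord hm₂ ha₂ hfix h1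
      exact sameCycle_mem ha₂ hfix h2 (rep_sameCycle ord y).symm
    · intro y hy
      have h1 : rep ord γ y ∈ AF ord γ (S₂, c₂) :=
        Finset.mem_union_left _ (Finset.mem_image.mpr ⟨y, hy, rfl⟩)
      rw [← hA] at h1
      have h2 : rep ord γ y ∈ S₁ := AF_subset ord hm₁ ha₁ hfix h1
      exact sameCycle_mem ha₁ hfix h2 (rep_sameCycle ord y).symm
  subst hS
  have hb₁ := tauF_bijective ord hm₁ ha₁ hfix hγ
  have hb₂ := tauF_bijective ord hm₂ ha₂ hfix hγ
  rw [dif_pos hb₁, dif_pos hb₂] at hπ'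
  have htau : ∀ u : {x : R // PaP ord γ x}, tauF ord γ (S₁, c₁) u = tauF ord γ (S₁, c₂) u := by
    intro u
    have h1 : Equiv.Perm.viaEmbedding (Equiv.ofBijective _ hb₁) η (η u) =
        Equiv.Perm.viaEmbedding (Equiv.ofBijective _ hb₂) η (η u) := by rw [hπ']
    rw [Equiv.Perm.viaEmbedding_apply, Equiv.Perm.viaEmbedding_apply] at h1
    exact η.injective h1
  have hrep_eq : ∀ u : R, u ∈ RpF ord γ (S₁, c₁) → c₁ u = c₂ u := by
    intro u hu
    have hu' : u ∈ RpF ord γ (S₁, c₂) := hu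
    have hPu : PaP ord γ u := PaP_of_memRp ord hm₁ ha₁ hfix hγ hu
    have h1 := htau ⟨u, hPu⟩
    rw [tauF_of_mem ord hm₁ ha₁ hfix hγ hu, tauF_of_mem ord hm₂ ha₂ hfix hγ hu'] at h1
    have hw : rep ord γ (c₁ u) = rep ord γ (c₂ u) := congrArg Subtype.val h1
    by_cases h2 : c₂ u = rep ord γ (c₂ u)
    · by_cases h3 : c₁ u = rep ord γ (c₂ u)
      · rw [h3, ← h2]
      · have hc₁A : c₁ u ∈ AF ord γ (S₁, c₂) := by
          rw [← hA]
          exact Finset.mem_union_right _ (Finset.mem_image.mpr ⟨u, hu, rfl⟩)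
        have hc₁Rp : c₁ u ∉ RpF ord γ (S₁, c₂) := by
          intro hmem
          exact h3 ((PaP_of_memRp ord hm₂ ha₂ hfix hγ hmem).1.symm.trans hw)
        rcases Finset.mem_union.mp hc₁A with hmem | hmem
        · exact absurd hmem hc₁Rp
        · obtain ⟨u', hu'', he⟩ := Finset.mem_image.mp hmem
          have h4 : rep ord γ (c₂ u') = rep ord γ (c₂ u) := by
            rw [he, ← hw]
          have h5 : γ.SameCycle u' u :=
            omap_inj ord ha₂ hfix (memS_of_memRp ord ha₂ hfix hu'') h4
          have h6 : rep ord γ u' = rep ord γ u := rep_congr ord h5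
          rw [(PaP_of_memRp ord hm₂ ha₂ hfix hγ hu'').1, hPu.1] at h6
          rw [← he, h6]
    · have hc₂A : c₂ u ∈ AF ord γ (S₁, c₁) := by
        rw [hA]
        exact Finset.mem_union_right _ (Finset.mem_image.mpr ⟨u, hu', rfl⟩)
      have hc₂Rp : c₂ u ∉ RpF ord γ (S₁, c₁) := by
        intro hmem
        exact h2 (PaP_of_memRp ord hm₁ ha₁ hfix hγ hmem).1.symm
      rcases Finset.mem_union.mp hc₂A with hmem | hmem
      · exact absurd hmem hc₂Rp
      · obtain ⟨u', hu'', he⟩ := Finset.mem_image.mp hmem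
        have h4 : rep ord γ (c₁ u') = rep ord γ (c₁ u) := by
          rw [he, hw]
        have h5 : γ.SameCycle u' u :=
          omap_inj ord ha₁ hfix (memS_of_memRp ord ha₁ hfix hu'') h4
        have h6 : rep ord γ u' = rep ord γ u := rep_congr ord h5
        rw [(PaP_of_memRp ord hm₁ ha₁ hfix hγ hu'').1, hPu.1] at h6
        rw [← he, h6]
  have hc : c₁ = c₂ := by
    apply Equiv.ext
    intro y
    by_cases hy : y ∈ S₁
    · have hry : rep ord γ y ∈ RpF ord γ (S₁, c₁) := Finset.mem_image.mpr ⟨y, hy, rfl⟩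
      obtain ⟨j, hj⟩ := sameCycle_pow (rep_sameCycle ord y).symm
      have hrS : rep ord γ y ∈ S₁ := memS_of_memRp ord ha₁ hfix hry
      calc c₁ y = c₁ ((γ ^ j) (rep ord γ y)) := by rw [hj]
        _ = (γ ^ j) (c₁ (rep ord γ y)) := commPow ha₁ hfix j hrS
        _ = (γ ^ j) (c₂ (rep ord γ y)) := by rw [hrep_eq _ hry]
        _ = c₂ ((γ ^ j) (rep ord γ y)) := (commPow ha₂ hfix j hrS).symm
        _ = c₂ y := by rw [hj]
    · rw [hm₁.2.2.2 y hy, hm₂.2.2.2 y hy]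
  rw [hc]

/-- The number of canonical representatives of non-trivial orbits is at most `r / 2`. -/
lemma card_PaP_le (γ : Equiv.Perm R) (hfix : γ 1 = 1) (ord : R ≃ Fin (Fintype.card R)) :
    Nat.card {x : R // PaP ord γ x} ≤ Fintype.card R / 2 := by
  classical
  rw [Nat.card_eq_fintype_card, Fintype.card_subtype]
  set RA : Finset R := Finset.univ.filter (PaP ord γ) with hRA
  have hdisj : Disjoint RA (RA.image γ) := by
    rw [Finset.disjoint_left]
    rintro a ha hb
    obtain ⟨x, hx, he⟩ := Finset.mem_image.mp hb
    rw [hRA, Finset.mem_filter] at ha hx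
    have h1 : γ.SameCycle x a := ⟨1, by rw [zpow_one]; exact he⟩
    have h2 : rep ord γ x = rep ord γ a := rep_congr ord h1
    rw [ha.2.1, hx.2.1] at h2
    exact hx.2.2 (he.trans h2.symm)
  have hinj : (RA.image γ).card = RA.card := Finset.card_image_of_injective RA γ.injective
  have hsub : RA ∪ RA.image γ ⊆ Finset.univ.erase 1 := by
    intro a ha
    rw [Finset.mem_erase]
    refine ⟨?_, Finset.mem_univ a⟩
    rcases Finset.mem_union.mp ha with h | h
    · rw [hRA, Finset.mem_filter] at h
      intro h1
      rw [h1] at h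
      exact h.2.2 hfix
    · obtain ⟨x, hx, he⟩ := Finset.mem_image.mp h
      rw [hRA, Finset.mem_filter] at hx
      intro h1
      apply hx.2.2
      have hx1 : x = 1 := γ.injective (by rw [he, h1, hfix])
      rw [hx1, hfix]
  have hcard : RA.card * 2 ≤ Fintype.card R := by
    have h1 : (RA ∪ RA.image γ).card = RA.card + RA.card := by
      rw [Finset.card_union_of_disjoint hdisj, hinj]
    have h2 : (RA ∪ RA.image γ).card ≤ (Finset.univ.erase (1 : R)).card :=
      Finset.card_le_card hsub
    rw [h1, Finset.card_erase_of_mem (Finset.mem_univ 1), Finset.card_univ] at h2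
    omega
  exact (Nat.le_div_iff_mul_le (by norm_num)).mpr hcard

/-- Main counting bound: the number of labelled Cayley maps admitting `γ` as an
automorphism is at most `2 ^ (r - 1) * (r / 2)!`. -/
theorem main_bound (γ : Equiv.Perm R) (hγ : γ ≠ 1) (hfix : γ 1 = 1) :
    ({p : Finset R × Equiv.Perm R |
        IsCayleyMap p.1 p.2 ∧ IsCayleyMapAut p.1 p.2 γ}).ncard ≤
      2 ^ (Fintype.card R - 1) * Nat.factorial (Fintype.card R / 2) := by
  classical
  set ord := Fintype.equivFin R with hord
  have hQT0 := card_PaP_le γ hfix ord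
  have hQT : Fintype.card {x : R // PaP ord γ x} ≤ Fintype.card R / 2 := by
    rwa [Nat.card_eq_fintype_card] at hQT0
  let η : {x : R // PaP ord γ x} ↪ Fin (Fintype.card R / 2) :=
    (Fintype.equivFin {x : R // PaP ord γ x}).toEmbedding.trans (Fin.castLEEmb hQT)
  have hinj := phi_injOn γ hγ hfix ord η
  have hcount := Set.ncard_le_ncard_of_injOn (PhiF ord γ η)
    (fun a _ => Set.mem_univ (PhiF ord γ η a)) hinj Set.finite_univ
  rw [Set.ncard_univ] at hcount
  refine le_trans hcount (le_of_eq ?_)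
  rw [Nat.card_eq_fintype_card, Fintype.card_prod, Fintype.card_finset, Fintype.card_perm,
    Fintype.card_fin]
  congr 2
  have h1 := Fintype.card_subtype_compl (fun x : R => x = 1)
  rw [Fintype.card_subtype_eq (1 : R)] at h1
  exact h1

end CayleyMapCountAux

/-- Let `R` be a finite group of order `r` and let `γ` be a non-identity permutation
of `R` fixing the identity and generating a cyclic group of order less than `r`.
The number of labelled Cayley maps on `R` admitting `γ` as an automorphism is at
most `(r - 1) * (r / 2) * ⌊r / 2⌋! * 2 ^ r`. -/
theorem count_cayley_maps_with_fixed_automorphism {R : Type*} [Group R] [Fintype R]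
    (γ : Equiv.Perm R) (hγ : γ ≠ 1) (hfix : γ 1 = 1)
    (hord : orderOf γ < Fintype.card R) :
    ({p : Finset R × Equiv.Perm R |
        IsCayleyMap p.1 p.2 ∧ IsCayleyMapAut p.1 p.2 γ}.ncard : ℝ) ≤
      ((Fintype.card R : ℝ) - 1) * ((Fintype.card R : ℝ) / 2) *
        (Nat.factorial (Fintype.card R / 2) : ℝ) * 2 ^ Fintype.card R := by
  classical
  have hbound := CayleyMapCountAux.main_bound γ hγ hfix
  set r := Fintype.card R with hr
  have hr2 : 2 ≤ r := by
    obtain ⟨x0, hx0⟩ : ∃ x, γ x ≠ x := by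
      by_contra hc
      push_neg at hc
      exact hγ (Equiv.ext fun x => by simpa using hc x)
    have : Nontrivial R := ⟨⟨γ x0, x0, hx0⟩⟩
    rw [hr]
    exact Fintype.one_lt_card
  have h1 : ({p : Finset R × Equiv.Perm R |
      IsCayleyMap p.1 p.2 ∧ IsCayleyMapAut p.1 p.2 γ}.ncard : ℝ) ≤
      (2 : ℝ) ^ (r - 1) * (Nat.factorial (r / 2) : ℝ) := by
    calc ({p : Finset R × Equiv.Perm R |
        IsCayleyMap p.1 p.2 ∧ IsCayleyMapAut p.1 p.2 γ}.ncard : ℝ)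
        ≤ ((2 ^ (r - 1) * Nat.factorial (r / 2) : ℕ) : ℝ) := by exact_mod_cast hbound
      _ = (2 : ℝ) ^ (r - 1) * (Nat.factorial (r / 2) : ℝ) := by push_cast; ring
  refine le_trans h1 ?_
  have hpow : (2 : ℝ) ^ r = 2 * 2 ^ (r - 1) := by
    calc (2 : ℝ) ^ r = 2 ^ ((r - 1) + 1) := by congr 1; omega
      _ = 2 * 2 ^ (r - 1) := by rw [pow_succ']
  rw [hpow]
  have hfac : (1 : ℝ) ≤ (Nat.factorial (r / 2) : ℝ) := by
    exact_mod_cast Nat.one_le_iff_ne_zero.mpr (Nat.factorial_ne_zero _)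
  have hrr : (2 : ℝ) ≤ (r : ℝ) := by exact_mod_cast hr2
  have key : (1 : ℝ) ≤ ((r : ℝ) - 1) * ((r : ℝ) / 2) * 2 := by nlinarith
  calc (2 : ℝ) ^ (r - 1) * (Nat.factorial (r / 2) : ℝ)
      = 1 * ((2 : ℝ) ^ (r - 1) * (Nat.factorial (r / 2) : ℝ)) := by ring
    _ ≤ (((r : ℝ) - 1) * ((r : ℝ) / 2) * 2) *
        ((2 : ℝ) ^ (r - 1) * (Nat.factorial (r / 2) : ℝ)) := by
        apply mul_le_mul_of_nonneg_right key (by positivity)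
    _ = ((r : ℝ) - 1) * ((r : ℝ) / 2) * (Nat.factorial (r / 2) : ℝ) * (2 * 2 ^ (r - 1)) := by
        ring
end

section
/- Let R be a finite group of order r with identity e, and let γ be a non-identity permutation of the set R fixing e and generating a cyclic group of order strictly less than r. For each l ≥ 2, let n_l be the number of cycles of length l in the cycle decomposition of γ. Then the number of labelled Cayley maps (S, 𝔯) on R such that γ is an automorphism of CM(R,S,𝔯) is at most Σ_{l=2}^{r−1} Σ_{k=1}^{n_l} C(n_l, k) · k! · l^k, where C(n, k) is the binomial coefficient. -/
open Finset

namespace Equiv.Perm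

variable {α : Type*} {γ r r' τ : Perm α}

lemma apply_apply_of_commute (h : Commute γ τ) (x : α) : γ (τ x) = τ (γ x) :=
  DFunLike.congr_fun h.eq x

lemma sameCycle_apply_apply_iff_of_commute (h : Commute γ τ) {x y : α} :
    γ.SameCycle (τ x) (τ y) ↔ γ.SameCycle x y := by
  have hconj : τ * γ * τ⁻¹ = γ := by rw [← h.eq, mul_inv_cancel_right]
  conv_lhs => rw [← hconj]
  simp [sameCycle_conj]

lemma apply_eq_of_sameCycle_of_commute (hr : Commute γ r) (hr' : Commute γ r') {x y : α}
    (hxy : γ.SameCycle x y) (h : r x = r' x) : r y = r' y := by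
  obtain ⟨j, rfl⟩ := hxy
  rw [← apply_apply_of_commute (hr.zpow_left j), ← apply_apply_of_commute (hr'.zpow_left j), h]

variable [Fintype α] [DecidableEq α]

def cyclesOfLength (γ : Perm α) (l : ℕ) : Finset (Perm α) :=
  γ.cycleFactorsFinset.filter (fun c => #c.support = l)

lemma cycleOf_apply_eq_conj_of_commute (h : Commute γ τ) (x : α) :
    γ.cycleOf (τ x) = τ * γ.cycleOf x * τ⁻¹ := by
  ext y
  obtain ⟨z, rfl⟩ := τ.surjective y
  by_cases hxz : γ.SameCycle x z
  · simp [cycleOf_apply, sameCycle_apply_apply_iff_of_commute h, hxz,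
      apply_apply_of_commute h]
  · simp [cycleOf_apply, sameCycle_apply_apply_iff_of_commute h, hxz]

lemma card_support_cycleOf_apply_of_commute (h : Commute γ τ) (x : α) :
    #(γ.cycleOf (τ x)).support = #(γ.cycleOf x).support := by
  rw [cycleOf_apply_eq_conj_of_commute h, card_support_conj]

lemma support_cycleOf_subset_of_commute (h : Commute γ r) {x : α} (hx : x ∈ r.support) :
    (γ.cycleOf x).support ⊆ r.support := by
  intro y hy
  obtain ⟨⟨j, rfl⟩, -⟩ := mem_support_cycleOf_iff.1 hy
  rw [mem_support, ← apply_apply_of_commute (h.zpow_left j), Ne,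
    EmbeddingLike.apply_eq_iff_eq]
  exact mem_support.1 hx

lemma exists_cyclesOfLength_of_commute (hγr : Commute γ r) (hr : r.IsCycleOn r.support)
    (hmove : ∀ x ∈ r.support, γ x ≠ x) (hne : r.support.Nonempty) :
    ∃ l, 2 ≤ l ∧ l ≤ #r.support ∧
      ∃ T ⊆ γ.cyclesOfLength l, T.Nonempty ∧ r.support = T.biUnion support := by
  obtain ⟨x₀, hx₀⟩ := hne
  refine ⟨_, (isCycle_cycleOf γ (hmove x₀ hx₀)).two_le_card_support,
    card_le_card (support_cycleOf_subset_of_commute hγr hx₀), r.support.image γ.cycleOf,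
    ?_, ⟨_, mem_image_of_mem _ hx₀⟩, ?_⟩
  · intro c hc
    obtain ⟨x, hx, rfl⟩ := mem_image.1 hc
    obtain ⟨i, rfl⟩ := hr.2 (mem_coe.2 hx₀) (mem_coe.2 hx)
    exact mem_filter.2 ⟨cycleOf_mem_cycleFactorsFinset_iff.2 (mem_support.2 (hmove _ hx)),
      card_support_cycleOf_apply_of_commute (hγr.zpow_right i) x₀⟩
  · ext x
    simp only [mem_biUnion, mem_image, exists_exists_and_eq_and]
    exact ⟨fun hx => ⟨x, hx,
      mem_support_cycleOf_iff.2 ⟨.refl _ _, mem_support.2 (hmove x hx)⟩⟩,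
      fun ⟨y, hy, hxy⟩ => support_cycleOf_subset_of_commute hγr hy hxy⟩

def commutingWithSupport (γ : Perm α) (T : Finset (Perm α)) : Set (Perm α) :=
  {r | Commute γ r ∧ r.support = T.biUnion support}

section BasePoints

variable {T : Finset (Perm α)} {base : T → α}

lemma cycleOf_mem_of_mem_biUnion_support (hT : T ⊆ γ.cycleFactorsFinset) {y : α}
    (hy : y ∈ T.biUnion support) : γ.cycleOf y ∈ T ∧ y ∈ (γ.cycleOf y).support := by
  obtain ⟨c, hc, hyc⟩ := mem_biUnion.1 hy
  have hc' := cycle_is_cycleOf hyc (hT hc)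
  exact ⟨hc' ▸ hc, hc' ▸ hyc⟩

lemma injOn_apply_base (hT : T ⊆ γ.cycleFactorsFinset)
    (hbase : ∀ c : T, base c ∈ (c : Perm α).support) :
    Set.InjOn (fun r c => r (base c)) (γ.commutingWithSupport T) := by
  rintro r ⟨hr, hrT⟩ r' ⟨hr', hr'T⟩ heq
  ext x
  by_cases hx : x ∈ T.biUnion support
  · obtain ⟨c, hc, hxc⟩ := mem_biUnion.1 hx
    have hcycle := cycle_is_cycleOf (hbase ⟨c, hc⟩) (hT hc)
    exact apply_eq_of_sameCycle_of_commute hr hr'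
      (mem_support_cycleOf_iff.1 (hcycle ▸ hxc)).1 (congrFun heq ⟨c, hc⟩)
  · rw [notMem_support.1 (hrT ▸ hx), notMem_support.1 (hr'T ▸ hx)]

/-- Commuting with `γ`, `r` maps the cycles in `T` injectively to cycles in `T`. -/
lemma apply_base_mem_biUnion_piFinset (hT : T ⊆ γ.cycleFactorsFinset)
    (hbase : ∀ c : T, base c ∈ (c : Perm α).support) {r : Perm α}
    (hr : r ∈ γ.commutingWithSupport T) :
    (fun c => r (base c)) ∈ (univ : Finset (T ↪ T)).biUnion fun σ =>
      Fintype.piFinset fun c => ((σ c : T) : Perm α).support := by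
  have hcycle (c : T) : γ.cycleOf (base c) = c := (cycle_is_cycleOf (hbase c) (hT c.2)).symm
  have hmem (c : T) : γ.cycleOf (r (base c)) ∈ T ∧
      r (base c) ∈ (γ.cycleOf (r (base c))).support := by
    have hc : base c ∈ r.support := hr.2 ▸ mem_biUnion.2 ⟨c, c.2, hbase c⟩
    exact cycleOf_mem_of_mem_biUnion_support hT (hr.2 ▸ apply_mem_support.2 hc)
  refine mem_biUnion.2 ⟨⟨fun c => ⟨_, (hmem c).1⟩, fun c c' hcc' => ?_⟩,
    mem_univ _, Fintype.mem_piFinset.2 fun c => (hmem c).2⟩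
  have h := (sameCycle_iff_cycleOf_eq_of_mem_support (support_cycleOf_le _ _ (hmem c).2)
    (support_cycleOf_le _ _ (hmem c').2)).2 (congrArg Subtype.val hcc')
  rw [sameCycle_apply_apply_iff_of_commute hr.1] at h
  exact Subtype.ext ((hcycle c).symm.trans (h.cycleOf_eq.trans (hcycle c')))

end BasePoints

lemma ncard_commutingWithSupport_le {l : ℕ} {T : Finset (Perm α)}
    (hT : T ⊆ γ.cyclesOfLength l) :
    (γ.commutingWithSupport T).ncard ≤ (#T).factorial * l ^ #T := by
  have hT' : T ⊆ γ.cycleFactorsFinset := hT.trans (filter_subset _ _)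
  have hl (c : T) : #(c : Perm α).support = l := (mem_filter.1 (hT c.2)).2
  choose base hbase using fun c : T =>
    (mem_cycleFactorsFinset_iff.1 (hT' c.2)).1.nonempty_support
  calc _ ≤ (((univ : Finset (T ↪ T)).biUnion fun σ => Fintype.piFinset fun c =>
          ((σ c : T) : Perm α).support : Finset (T → α)) : Set (T → α)).ncard :=
        Set.ncard_le_ncard_of_injOn _ (fun r hr => apply_base_mem_biUnion_piFinset hT' hbase hr)
          (injOn_apply_base hT' hbase) (finite_toSet _)
    _ ≤ ∑ σ : T ↪ T, ∏ c : T, #((σ c : T) : Perm α).support := by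
        rw [Set.ncard_coe_finset]
        exact card_biUnion_le.trans (by simp [Fintype.card_piFinset])
    _ = (#T).factorial * l ^ #T := by
        simp [hl, Fintype.card_embedding_eq, Nat.descFactorial_self]

lemma ncard_biUnion_powersetCard_cyclesOfLength_le (γ : Perm α) (l k : ℕ) :
    (⋃ T ∈ powersetCard k (γ.cyclesOfLength l), γ.commutingWithSupport T).ncard ≤
      (#(γ.cyclesOfLength l)).choose k * k.factorial * l ^ k :=
  calc _ ≤ ∑ T ∈ powersetCard k (γ.cyclesOfLength l), k.factorial * l ^ k :=
        (set_ncard_biUnion_le _ _).trans <| sum_le_sum fun T hT => by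
          obtain ⟨hTl, rfl⟩ := mem_powersetCard.1 hT
          exact ncard_commutingWithSupport_le hTl
    _ = _ := by rw [sum_const, card_powersetCard, smul_eq_mul, mul_assoc]

end Equiv.Perm

section CayleyMap

variable {R : Type*} [Group R] {S : Finset R} {r φ : Equiv.Perm R}

lemma IsCayleyMapAut.commute (hr : IsCyclicOrderingOn S r) (h : IsCayleyMapAut S r φ)
    (h1 : φ 1 = 1) : Commute φ r := by
  ext x
  by_cases hx : x ∈ S
  · simpa [h1] using h.2 1 x (by simpa using hx)
  · have hφx : φ x ∉ S := by simpa [h1] using (h.1 x 1).not.1 (by simpa using hx)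
    simp [hr.2.2 x hx, hr.2.2 _ hφx]

/-- `φ` commutes with the rotation at the fixed vertex `g`, which is transitive on the
neighbours `S * g`, so one fixed neighbour forces all of them to be fixed. -/
lemma IsCayleyMapAut.apply_mul_eq_of_apply_mul_eq (hr : r.IsCycleOn (S : Set R))
    (h : IsCayleyMapAut S r φ) {g s₀ s : R} (hg : φ g = g) (hs₀ : s₀ ∈ S)
    (hfix : φ (s₀ * g) = s₀ * g) (hs : s ∈ S) : φ (s * g) = s * g := by
  obtain ⟨n, -, rfl⟩ := hr.exists_pow_eq hs₀ hs
  induction n with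
  | zero => simpa using hfix
  | succ n ih =>
    have hmem : (r ^ n) s₀ ∈ S := hr.1.mapsTo.perm_pow n hs₀
    rw [pow_succ', Equiv.Perm.mul_apply]
    simpa [hg, ih hmem] using h.2 g ((r ^ n) s₀ * g) (by simpa using hmem)

lemma IsCayleyMapAut.eq_one_of_forall_mem_apply_eq (hS : IsCayleyMap S r)
    (h : IsCayleyMapAut S r φ) (h1 : φ 1 = 1) (hfix : ∀ s ∈ S, φ s = s) : φ = 1 := by
  obtain ⟨⟨-, hinv, hgen⟩, hr, -⟩ := hS
  -- propagate "`φ` fixes `g` and all its neighbours" along the edges of the Cayley graph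
  have step : ∀ s₀ ∈ S, ∀ g, (φ g = g ∧ ∀ s ∈ S, φ (s * g) = s * g) →
      φ (s₀ * g) = s₀ * g ∧ ∀ s ∈ S, φ (s * (s₀ * g)) = s * (s₀ * g) :=
    fun s₀ hs₀ g hg => ⟨hg.2 s₀ hs₀, fun s hs => h.apply_mul_eq_of_apply_mul_eq hr
      (hg.2 s₀ hs₀) (hinv s₀ hs₀) (by simpa using hg.1) hs⟩
  ext g
  have hg : g ∈ Subgroup.closure (S : Set R) := hgen ▸ Subgroup.mem_top g
  suffices φ g = g ∧ ∀ s ∈ S, φ (s * g) = s * g from this.1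
  induction hg using Subgroup.closure_induction_left with
  | one => exact ⟨h1, by simpa using hfix⟩
  | mul_left s₀ hs₀ g _ ih => exact step s₀ hs₀ g ih
  | inv_mul_cancel s₀ hs₀ g _ ih => exact step s₀⁻¹ (hinv s₀ hs₀) g ih

lemma IsCayleyMapAut.apply_ne_self (hS : IsCayleyMap S r) (h : IsCayleyMapAut S r φ)
    (hφ : φ ≠ 1) (h1 : φ 1 = 1) {s : R} (hs : s ∈ S) : φ s ≠ s := fun hfix =>
  hφ <| h.eq_one_of_forall_mem_apply_eq hS h1 fun t ht => by
    simpa using h.apply_mul_eq_of_apply_mul_eq hS.2.1 h1 hs (by simpa using hfix) ht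

lemma IsCayleyMapAut.nonempty (hS : IsCayleyMap S r) (h : IsCayleyMapAut S r φ)
    (hφ : φ ≠ 1) (h1 : φ 1 = 1) : S.Nonempty := by
  rw [nonempty_iff_ne_empty]
  rintro rfl
  exact hφ (h.eq_one_of_forall_mem_apply_eq hS h1 (by simp))

variable [Fintype R] [DecidableEq R]

lemma IsCyclicOrderingOn.support_eq (h : IsCyclicOrderingOn S r) : r.support = S := by
  ext x
  rw [Equiv.Perm.mem_support]
  exact ⟨fun hx => by_contra fun hxS => hx (h.2.2 x hxS), h.2.1 x⟩

lemma IsCayleyMap.exists_cyclesOfLength {γ : Equiv.Perm R} (hS : IsCayleyMap S r)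
    (h : IsCayleyMapAut S r γ) (hγ : γ ≠ 1) (h1 : γ 1 = 1) :
    ∃ l ∈ Icc 2 (Fintype.card R - 1), ∃ T ⊆ γ.cyclesOfLength l,
      T.Nonempty ∧ r ∈ γ.commutingWithSupport T := by
  have hsupp := hS.2.support_eq
  have hγr := h.commute hS.2 h1
  obtain ⟨l, hl2, hlS, T, hT, hTne, hTsupp⟩ :=
    Equiv.Perm.exists_cyclesOfLength_of_commute hγr (hsupp ▸ hS.2.1)
      (fun s hs => h.apply_ne_self hS hγ h1 (hsupp ▸ hs)) (hsupp ▸ h.nonempty hS hγ h1)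
  have hcard : #r.support < Fintype.card R := hsupp ▸ card_lt_univ_of_notMem hS.1.1
  exact ⟨l, mem_Icc.2 ⟨hl2, by omega⟩, T, hT, hTne, hγr, hTsupp⟩

end CayleyMap

theorem count_cayley_maps_with_fixed_automorphism_sum_bound_general
    {R : Type*} [Group R] [Fintype R] [DecidableEq R]
    (γ : Equiv.Perm R) (hγ : γ ≠ 1) (hfix : γ 1 = 1)
    (n : ℕ → ℕ)
    (hn : ∀ l : ℕ, n l = (γ.cycleFactorsFinset.filter
      (fun c => c.support.card = l)).card) :
    {p : Finset R × Equiv.Perm R |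
        IsCayleyMap p.1 p.2 ∧ IsCayleyMapAut p.1 p.2 γ}.ncard ≤
      ∑ l ∈ Finset.Icc 2 (Fintype.card R - 1), ∑ k ∈ Finset.Icc 1 (n l),
        Nat.choose (n l) k * Nat.factorial k * l ^ k := by
  have hsub : {p : Finset R × Equiv.Perm R | IsCayleyMap p.1 p.2 ∧ IsCayleyMapAut p.1 p.2 γ} ⊆
      (fun r => (r.support, r)) '' ⋃ l ∈ Icc 2 (Fintype.card R - 1), ⋃ k ∈ Icc 1 (n l),
        ⋃ T ∈ powersetCard k (γ.cyclesOfLength l), γ.commutingWithSupport T := by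
    rintro ⟨S, r⟩ ⟨hS, h⟩
    obtain ⟨l, hl, T, hT, hTne, hrT⟩ := hS.exists_cyclesOfLength h hγ hfix
    refine ⟨r, ?_, by simp [hS.2.support_eq]⟩
    simp only [Set.mem_iUnion]
    exact ⟨l, hl, #T, mem_Icc.2 ⟨hTne.card_pos, hn l ▸ card_le_card hT⟩, T,
      mem_powersetCard.2 ⟨hT, rfl⟩, hrT⟩
  calc _ ≤ _ := (Set.ncard_le_ncard hsub (Set.toFinite _)).trans
        (Set.ncard_image_le (Set.toFinite _))
    _ ≤ ∑ l ∈ Icc 2 (Fintype.card R - 1), ∑ k ∈ Icc 1 (n l),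
          (⋃ T ∈ powersetCard k (γ.cyclesOfLength l), γ.commutingWithSupport T).ncard :=
        (set_ncard_biUnion_le _ _).trans <| sum_le_sum fun l _ => set_ncard_biUnion_le _ _
    _ ≤ _ := sum_le_sum fun l _ => sum_le_sum fun k _ =>
        hn l ▸ γ.ncard_biUnion_powersetCard_cyclesOfLength_le l k

/-- Let `R` be a finite group of order `r` and let `γ` be a non-identity permutation
of `R` fixing the identity and generating a cyclic group of order less than `r`.
Writing `n l` for the number of cycles of length `l` in the cycle decomposition of
`γ`, the number of labelled Cayley maps on `R` admitting `γ` as an automorphism is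
at most `∑_{l = 2}^{r - 1} ∑_{k = 1}^{n l} C(n l, k) * k! * l ^ k`. -/
theorem count_cayley_maps_with_fixed_automorphism_sum_bound
    {R : Type*} [Group R] [Fintype R] [DecidableEq R]
    (γ : Equiv.Perm R) (hγ : γ ≠ 1) (hfix : γ 1 = 1)
    (hord : orderOf γ < Fintype.card R)
    (n : ℕ → ℕ)
    (hn : ∀ l : ℕ, n l = (γ.cycleFactorsFinset.filter
      (fun c => c.support.card = l)).card) :
    {p : Finset R × Equiv.Perm R |
        IsCayleyMap p.1 p.2 ∧ IsCayleyMapAut p.1 p.2 γ}.ncard ≤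
      ∑ l ∈ Finset.Icc 2 (Fintype.card R - 1), ∑ k ∈ Finset.Icc 1 (n l),
        Nat.choose (n l) k * Nat.factorial k * l ^ k :=
  count_cayley_maps_with_fixed_automorphism_sum_bound_general γ hγ hfix n hn
end
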